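/- arXiv:2303.12554 — 2 statements merged into one kernel-verified Lean document; each statement's English description precedes it below -/
import Mathlib

section
/- Let a circle of radius a>0 in the xy-plane be parametrized by γ(α) = (a cos α, a sin α, 0). Given a point x = (x₁,x₂,x₃) ∈ ℝ³ not on the circle and with x₁²+x₂² > 0, define R²(α) = (a cos α − x₁)² + (a sin α − x₂)² + x₃², extended to complex α via the same algebraic formula. Then R²(α₀) = 0 for α₀ = atan2(x₂,x₁) ± i ln(λ + √(λ²−1)), where λ = (a² + x₁² + x₂² + x₃²)/(2a√(x₁²+x₂²)). -/
/-!
Write `x₁ + x₂ i = ρ e^{iθ}`. By the law of cosines, which persists for complex angles,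
`R²(α) = a² + ρ² + x₃² - 2aρ cos(α - θ) = 2aρ (λ - cos(α - θ))`, so the roots are the solutions
of `cos(α - θ) = λ`. Since `λ ≥ 1` by AM-GM, `α - θ = ± i arcosh λ` is one, as `cos(i t) = cosh t`.
-/

open Complex

theorem Complex.law_of_cosines (a ρ α θ : ℂ) :
    (a * cos α - ρ * cos θ) ^ 2 + (a * sin α - ρ * sin θ) ^ 2 =
      a ^ 2 + ρ ^ 2 - 2 * a * ρ * cos (α - θ) := by
  rw [cos_sub]
  linear_combination a ^ 2 * sin_sq_add_cos_sq α + ρ ^ 2 * sin_sq_add_cos_sq θ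

theorem Complex.cos_sign_mul_I_mul {s : ℝ} (hs : s = 1 ∨ s = -1) (t : ℝ) :
    cos (s * I * t) = Real.cosh t := by
  rcases hs with rfl | rfl <;> simp [mul_comm I, cos_mul_I]

theorem one_le_sq_add_sq_add_sq_div {a ρ : ℝ} (ha : 0 < a) (hρ : 0 < ρ) (c : ℝ) :
    1 ≤ (a ^ 2 + ρ ^ 2 + c ^ 2) / (2 * a * ρ) := by
  rw [one_le_div (by positivity)]
  nlinarith [sq_nonneg (a - ρ), sq_nonneg c]

theorem circle_root_general (a x₁ x₂ x₃ : ℝ) (ha : 0 < a) (hρ : 0 < x₁ ^ 2 + x₂ ^ 2)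
    (lam : ℝ)
    (hlam : lam = (a ^ 2 + x₁ ^ 2 + x₂ ^ 2 + x₃ ^ 2) / (2 * a * Real.sqrt (x₁ ^ 2 + x₂ ^ 2)))
    (s : ℝ) (hs : s = 1 ∨ s = -1) (α₀ : ℂ)
    (hα₀ : α₀ = (Complex.arg ((x₁ : ℂ) + (x₂ : ℂ) * Complex.I) : ℂ) +
      (s : ℂ) * Complex.I * (Real.log (lam + Real.sqrt (lam ^ 2 - 1)) : ℂ)) :
    ((a : ℂ) * Complex.cos α₀ - (x₁ : ℂ)) ^ 2 +
      ((a : ℂ) * Complex.sin α₀ - (x₂ : ℂ)) ^ 2 + (x₃ : ℂ) ^ 2 = 0 := by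
  set z : ℂ := x₁ + x₂ * I
  set ρ := √(x₁ ^ 2 + x₂ ^ 2)
  have hz : ‖z‖ = ρ := by rw [norm_def, normSq_add_mul_I]
  have hρ_pos : 0 < ρ := Real.sqrt_pos.mpr hρ
  have hρ_sq : ρ ^ 2 = x₁ ^ 2 + x₂ ^ 2 := Real.sq_sqrt hρ.le
  have hx₁ : (x₁ : ℂ) = ρ * cos (arg z) := by
    rw [← hz, ← ofReal_cos, ← ofReal_mul, norm_mul_cos_arg]; simp [z]
  have hx₂ : (x₂ : ℂ) = ρ * sin (arg z) := by
    rw [← hz, ← ofReal_sin, ← ofReal_mul, norm_mul_sin_arg]; simp [z]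
  have hlam_ge : 1 ≤ lam := by
    rw [hlam, add_assoc (a ^ 2), ← hρ_sq]; exact one_le_sq_add_sq_add_sq_div ha hρ_pos x₃
  have hcos : cos (α₀ - arg z) = lam := by
    rw [hα₀, add_sub_cancel_left, ← Real.arcosh, cos_sign_mul_I_mul hs, Real.cosh_arcosh hlam_ge]
  have hlam_mul : lam * (2 * a * ρ) = a ^ 2 + ρ ^ 2 + x₃ ^ 2 := by
    rw [hρ_sq, hlam]; field_simp; ring
  rw [hx₁, hx₂, law_of_cosines, hcos]
  norm_cast
  linear_combination -hlam_mul

/-- Root of the (analytically continued) squared distance function for a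
circle of radius `a` in the `xy`-plane: for `α₀ = atan2(x₂,x₁) ± i ln(λ+√(λ²−1))`
with `λ = (a²+x₁²+x₂²+x₃²)/(2a√(x₁²+x₂²))`, one has `R²(α₀) = 0`. -/
theorem circle_root (a x₁ x₂ x₃ : ℝ) (ha : 0 < a) (hρ : 0 < x₁ ^ 2 + x₂ ^ 2)
    (hoff : ∀ α : ℝ, ¬ (x₁ = a * Real.cos α ∧ x₂ = a * Real.sin α ∧ x₃ = 0))
    (lam : ℝ)
    (hlam : lam = (a ^ 2 + x₁ ^ 2 + x₂ ^ 2 + x₃ ^ 2) / (2 * a * Real.sqrt (x₁ ^ 2 + x₂ ^ 2)))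
    (s : ℝ) (hs : s = 1 ∨ s = -1) (α₀ : ℂ)
    (hα₀ : α₀ = (Complex.arg ((x₁ : ℂ) + (x₂ : ℂ) * Complex.I) : ℂ) +
      (s : ℂ) * Complex.I * (Real.log (lam + Real.sqrt (lam ^ 2 - 1)) : ℂ)) :
    ((a : ℂ) * Complex.cos α₀ - (x₁ : ℂ)) ^ 2 +
      ((a : ℂ) * Complex.sin α₀ - (x₂ : ℂ)) ^ 2 + (x₃ : ℂ) ^ 2 = 0 :=
  circle_root_general a x₁ x₂ x₃ ha hρ lam hlam s hs α₀ hα₀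
end

section
/- Let γ(θ,φ) = a(sin θ cos φ, sin θ sin φ, cos θ) parametrize a sphere of radius a > 0. Fix φ̄ ∈ [0,2π) and a point x = (x₁,x₂,x₃) not on the sphere, and assume it is not the case that x₃ = 0 and x₁ cos φ̄ + x₂ sin φ̄ = 0. Define R²(θ) = (a sin θ cos φ̄ − x₁)² + (a sin θ sin φ̄ − x₂)² + (a cos θ − x₃)², extended analytically to complex θ. Then R²(θ₀) = 0 for θ₀ = atan2(x₁ cos φ̄ + x₂ sin φ̄, x₃) ± i ln(λ + √(λ²−1)), where λ = (a² + x₁² + x₂² + x₃²)/(2a√((x₁ cos φ̄ + x₂ sin φ̄)² + x₃²)), and λ > 1. -/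
/-!
Writing `c = x₁ cos φ̄ + x₂ sin φ̄` and `z = x₃ + c i`, the squared distance expands to
`R²(θ) = a² + |x|² - 2a (c sin θ + x₃ cos θ) = a² + |x|² - 2a |z| cos (θ - arg z)`,
so `R²(θ₀) = 0` exactly when `cos (θ₀ - arg z) = λ`. Since `λ ≥ 1`, this is solved by
`θ₀ - arg z = ± i arcosh λ`, because `cos (± i t) = cosh t`. That `λ > 1` is the strict
AM-GM inequality `2a|z| < a² + |x|²`, strict because `|z| ≤ |x|` and `|x| ≠ a`.
-/

open Complex

theorem sq_mul_cos_add_mul_sin_le (x y t : ℝ) :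
    (x * Real.cos t + y * Real.sin t) ^ 2 ≤ x ^ 2 + y ^ 2 := by
  nlinarith [sq_nonneg (x * Real.sin t - y * Real.cos t), Real.sin_sq_add_cos_sq t]

theorem two_mul_mul_lt_sq_add {a r X : ℝ} (hr : r ^ 2 ≤ X) (hX : X ≠ a ^ 2) :
    2 * a * r < a ^ 2 + X := by
  rcases hr.lt_or_eq with hlt | rfl
  · nlinarith [sq_nonneg (a - r)]
  · have : a - r ≠ 0 := fun h => hX (by rw [sub_eq_zero.mp h])
    nlinarith [sq_pos_of_ne_zero this]

theorem sphere_dist_sq_eq {R : Type*} [CommRing R] {a x₁ x₂ x₃ S C u v : R}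
    (hSC : S ^ 2 + C ^ 2 = 1) (huv : u ^ 2 + v ^ 2 = 1) :
    (a * S * u - x₁) ^ 2 + (a * S * v - x₂) ^ 2 + (a * C - x₃) ^ 2 =
      a ^ 2 + (x₁ ^ 2 + x₂ ^ 2 + x₃ ^ 2) - 2 * a * ((x₁ * u + x₂ * v) * S + x₃ * C) := by
  linear_combination a ^ 2 * S ^ 2 * huv + a ^ 2 * hSC

theorem Complex.re_mul_cos_add_im_mul_sin (z θ : ℂ) :
    (z.re : ℂ) * cos θ + (z.im : ℂ) * sin θ = (‖z‖ : ℂ) * cos (θ - arg z) := by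
  rw [cos_sub, ← norm_mul_cos_arg z, ← norm_mul_sin_arg z]
  push_cast
  ring

theorem Complex.cos_sign_mul_I_mul_arcosh {s x : ℝ} (hs : s = 1 ∨ s = -1) (hx : 1 ≤ x) :
    cos (s * I * Real.arcosh x) = x := by
  have hcos : cos (I * Real.arcosh x) = x := by
    rw [mul_comm, cos_mul_I, ← ofReal_cosh, Real.cosh_arcosh hx]
  rcases hs with rfl | rfl
  · simpa using hcos
  · simpa [neg_mul] using hcos

theorem sphere_theta_root_general (a : ℝ) (ha : 0 < a)
    (φbar : ℝ)
    (x₁ x₂ x₃ : ℝ) (hoff : x₁ ^ 2 + x₂ ^ 2 + x₃ ^ 2 ≠ a ^ 2)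
    (hnd : ¬ (x₃ = 0 ∧ x₁ * Real.cos φbar + x₂ * Real.sin φbar = 0))
    (lam : ℝ)
    (hlam : lam = (a ^ 2 + x₁ ^ 2 + x₂ ^ 2 + x₃ ^ 2) /
      (2 * a * Real.sqrt ((x₁ * Real.cos φbar + x₂ * Real.sin φbar) ^ 2 + x₃ ^ 2)))
    (s : ℝ) (hs : s = 1 ∨ s = -1) (θ₀ : ℂ)
    (hθ₀ : θ₀ = (Complex.arg (((x₃ : ℂ)) + ((x₁ * Real.cos φbar + x₂ * Real.sin φbar : ℝ) : ℂ) * Complex.I) : ℂ) +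
      (s : ℂ) * Complex.I * (Real.log (lam + Real.sqrt (lam ^ 2 - 1)) : ℂ)) :
    ((a : ℂ) * Complex.sin θ₀ * (Real.cos φbar : ℂ) - (x₁ : ℂ)) ^ 2 +
      ((a : ℂ) * Complex.sin θ₀ * (Real.sin φbar : ℂ) - (x₂ : ℂ)) ^ 2 +
      ((a : ℂ) * Complex.cos θ₀ - (x₃ : ℂ)) ^ 2 = 0 ∧
    1 < lam := by
  set c := x₁ * Real.cos φbar + x₂ * Real.sin φbar
  set z : ℂ := x₃ + c * I
  have hz : ‖z‖ = √(c ^ 2 + x₃ ^ 2) := by rw [norm_add_mul_I, add_comm]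
  have hz_pos : 0 < ‖z‖ := norm_pos_iff.2 fun h =>
    hnd ⟨by simpa [z] using congrArg re h, by simpa [z] using congrArg im h⟩
  have hz_le : ‖z‖ ^ 2 ≤ x₁ ^ 2 + x₂ ^ 2 + x₃ ^ 2 := by
    rw [hz, Real.sq_sqrt (by positivity)]
    linarith [sq_mul_cos_add_mul_sin_le x₁ x₂ φbar]
  have hlam_mul : 2 * a * ‖z‖ * lam = a ^ 2 + (x₁ ^ 2 + x₂ ^ 2 + x₃ ^ 2) := by
    rw [hlam, ← hz]
    field_simp
    ring
  have hlam_gt : 1 < lam := by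
    rw [hlam, ← hz, one_lt_div (by positivity)]
    linarith [two_mul_mul_lt_sq_add hz_le hoff]
  refine ⟨?_, hlam_gt⟩
  have hcos : cos (θ₀ - arg z) = lam := by
    rw [hθ₀, add_sub_cancel_left]
    exact cos_sign_mul_I_mul_arcosh hs hlam_gt.le
  have hproj : (x₃ : ℂ) * cos θ₀ + (c : ℂ) * sin θ₀ = ‖z‖ * lam := by
    simpa [z, hcos] using re_mul_cos_add_im_mul_sin z θ₀
  have hc : (c : ℂ) = x₁ * (Real.cos φbar : ℂ) + x₂ * (Real.sin φbar : ℂ) := by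
    simp only [c, ofReal_add, ofReal_mul]
  have hlam_mulC : 2 * (a : ℂ) * ‖z‖ * lam = a ^ 2 + (x₁ ^ 2 + x₂ ^ 2 + x₃ ^ 2) := by
    exact_mod_cast hlam_mul
  rw [sphere_dist_sq_eq (sin_sq_add_cos_sq θ₀) (by exact_mod_cast Real.cos_sq_add_sin_sq φbar),
    ← hc]
  linear_combination (-2 * (a : ℂ)) * hproj - hlam_mulC

/-- Root in `θ` of the squared distance function for a sphere of radius `a`
at fixed azimuthal angle `φ̄`: `R²(θ₀)=0` for
`θ₀ = atan2(x₁cosφ̄+x₂sinφ̄, x₃) ± i ln(λ+√(λ²−1))`, with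
`λ = (a²+x₁²+x₂²+x₃²)/(2a√((x₁cosφ̄+x₂sinφ̄)²+x₃²))`, and `λ > 1`. -/
theorem sphere_theta_root (a : ℝ) (ha : 0 < a)
    (φbar : ℝ) (hφ : φbar ∈ Set.Ico (0 : ℝ) (2 * π))
    (x₁ x₂ x₃ : ℝ) (hoff : x₁ ^ 2 + x₂ ^ 2 + x₃ ^ 2 ≠ a ^ 2)
    (hnd : ¬ (x₃ = 0 ∧ x₁ * Real.cos φbar + x₂ * Real.sin φbar = 0))
    (lam : ℝ)
    (hlam : lam = (a ^ 2 + x₁ ^ 2 + x₂ ^ 2 + x₃ ^ 2) /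
      (2 * a * Real.sqrt ((x₁ * Real.cos φbar + x₂ * Real.sin φbar) ^ 2 + x₃ ^ 2)))
    (s : ℝ) (hs : s = 1 ∨ s = -1) (θ₀ : ℂ)
    (hθ₀ : θ₀ = (Complex.arg (((x₃ : ℂ)) + ((x₁ * Real.cos φbar + x₂ * Real.sin φbar : ℝ) : ℂ) * Complex.I) : ℂ) +
      (s : ℂ) * Complex.I * (Real.log (lam + Real.sqrt (lam ^ 2 - 1)) : ℂ)) :
    ((a : ℂ) * Complex.sin θ₀ * (Real.cos φbar : ℂ) - (x₁ : ℂ)) ^ 2 +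
      ((a : ℂ) * Complex.sin θ₀ * (Real.sin φbar : ℂ) - (x₂ : ℂ)) ^ 2 +
      ((a : ℂ) * Complex.cos θ₀ - (x₃ : ℂ)) ^ 2 = 0 ∧
    1 < lam :=
  sphere_theta_root_general a ha φbar x₁ x₂ x₃ hoff hnd lam hlam s hs θ₀ hθ₀
end
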